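/- For any measure-preserving system (M,μ,f) with μ a probability measure, any measurable set E with μ(E) > 0, and any t > 0, the measure of the set of points whose first hitting time to E is at most t/μ(E) satisfies μ(τ_E ≤ t/μ(E)) ≤ t + μ(E). -/

import Mathlib

/-! The set is covered by the preimages `f^[k] ⁻¹' E` with `1 ≤ k ≤ ⌊t / μ E⌋`, each of measure
at most `μ E` because `f` preserves `μ`; the union bound already gives `t`. -/

open MeasureTheory

namespace MeasureTheory.MeasurePreserving

variable {α : Type*} [MeasurableSpace α] {μ : Measure α} {f : α → α}

theorem measure_exists_iterate_mem_le (hf : MeasurePreserving f μ μ) (s : Set α) (n : ℕ) :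
    μ {x | ∃ k : ℕ, 1 ≤ k ∧ k ≤ n ∧ f^[k] x ∈ s} ≤ n * μ s := by
  have hsub : {x | ∃ k : ℕ, 1 ≤ k ∧ k ≤ n ∧ f^[k] x ∈ s} ⊆ ⋃ k ∈ Finset.Icc 1 n, f^[k] ⁻¹' s := by
    rintro x ⟨k, hk1, hkn, hks⟩
    exact Set.mem_biUnion (Finset.mem_Icc.2 ⟨hk1, hkn⟩) hks
  calc μ {x | ∃ k : ℕ, 1 ≤ k ∧ k ≤ n ∧ f^[k] x ∈ s}
      ≤ ∑ k ∈ Finset.Icc 1 n, μ (f^[k] ⁻¹' s) :=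
        (measure_mono hsub).trans (measure_biUnion_finset_le _ _)
    _ ≤ ∑ _k ∈ Finset.Icc 1 n, μ s :=
        Finset.sum_le_sum fun k _ => (hf.iterate k).measure_preimage_le s
    _ = n * μ s := by simp

end MeasureTheory.MeasurePreserving

theorem Real.natFloor_div_mul_le_of_pos {t c : ℝ} (hc : 0 ≤ c) (h : 0 < ⌊t / c⌋₊) :
    ⌊t / c⌋₊ * c ≤ t := by
  have hquot : 1 ≤ t / c := Nat.floor_pos.1 h
  have hc : 0 < c := hc.lt_of_ne' fun hc0 => by norm_num [hc0] at hquot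
  exact (le_div_iff₀ hc).1 (Nat.floor_le (zero_le_one.trans hquot))

theorem ENNReal.natFloor_div_toReal_mul_le (t : ℝ) (a : ENNReal) :
    (⌊t / a.toReal⌋₊ : ENNReal) * a ≤ ENNReal.ofReal t := by
  rcases Nat.eq_zero_or_pos ⌊t / a.toReal⌋₊ with h | h
  · simp [h]
  have ha : a ≠ ⊤ := by rintro rfl; simp at h
  rw [← ENNReal.ofReal_toReal ha, ← ENNReal.ofReal_natCast, ← ENNReal.ofReal_mul (by positivity),
    ENNReal.toReal_ofReal ENNReal.toReal_nonneg]
  exact ENNReal.ofReal_le_ofReal (Real.natFloor_div_mul_le_of_pos ENNReal.toReal_nonneg h)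

theorem stmt2_general {M : Type*} [MeasurableSpace M] (μ : Measure M)
    (f : M → M) (hf : MeasurePreserving f μ μ)
    (E : Set M) (t : ℝ) :
    μ {x | ∃ k : ℕ, 1 ≤ k ∧ (k : ℝ) ≤ t / (μ E).toReal ∧ f^[k] x ∈ E}
      ≤ ENNReal.ofReal t + μ E := by
  calc μ {x | ∃ k : ℕ, 1 ≤ k ∧ (k : ℝ) ≤ t / (μ E).toReal ∧ f^[k] x ∈ E}
      ≤ μ {x | ∃ k : ℕ, 1 ≤ k ∧ k ≤ ⌊t / (μ E).toReal⌋₊ ∧ f^[k] x ∈ E} :=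
        measure_mono fun x ⟨k, hk1, hkt, hkE⟩ => ⟨k, hk1, Nat.le_floor hkt, hkE⟩
    _ ≤ ⌊t / (μ E).toReal⌋₊ * μ E := hf.measure_exists_iterate_mem_le E _
    _ ≤ ENNReal.ofReal t := ENNReal.natFloor_div_toReal_mul_le t (μ E)
    _ ≤ ENNReal.ofReal t + μ E := le_self_add

/-- Lemma (Galves–Schmitt): for a measure preserving system and a positive
measure set `E`, the set of points whose first hitting time to `E` is at most
`t / μ(E)` has measure at most `t + μ(E)`. The hitting time is
`τ_E(x) = inf {k ≥ 1 : f^k(x) ∈ E}` (with `inf ∅ = +∞`), so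
`{τ_E ≤ t/μ(E)}` is the set of points hitting `E` at some time `k` with
`1 ≤ k ≤ t/μ(E)`. -/
theorem stmt2 {M : Type*} [MeasurableSpace M] (μ : Measure M) [IsProbabilityMeasure μ]
    (f : M → M) (hfm : Measurable f) (hf : MeasurePreserving f μ μ)
    (E : Set M) (hE : MeasurableSet E) (hpos : 0 < μ E) (t : ℝ) (ht : 0 < t) :
    μ {x | ∃ k : ℕ, 1 ≤ k ∧ (k : ℝ) ≤ t / (μ E).toReal ∧ f^[k] x ∈ E}
      ≤ ENNReal.ofReal t + μ E :=
  stmt2_general μ f hf E t
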